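/- arXiv:1709.09790 — 5 statements merged into one kernel-verified Lean document; each statement's English description precedes it below -/
import Mathlib

section
/- Let F be a field of characteristic different from 2 and 3, let s ∈ F*, and let g_s = diag(1,s) ∈ GL₂(F). Then the twisted action map f ↦ s⁻¹·(g_s·f) sends every binary cubic form over F of discriminant Δ to a binary cubic form of discriminant s²·Δ, and for each fixed Δ ∈ F it induces a bijection between the set of SL₂(F)-orbits of binary cubic forms of discriminant Δ and the set of SL₂(F)-orbits of binary cubic forms of discriminant s²·Δ. -/
/-- A binary cubic form `a x³ + 3b x²y + 3c xy² + d y³` over a commutative ring,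
recorded by its coefficient quadruple `(a, b, c, d)`. -/
structure BinaryCubic (R : Type*) [CommRing R] where
  a : R
  b : R
  c : R
  d : R

namespace BinaryCubic

variable {R : Type*} [CommRing R]

/-- Evaluation of the binary cubic form `a x³ + 3b x²y + 3c xy² + d y³`. -/
def eval (f : BinaryCubic R) (x y : R) : R :=
  f.a * x ^ 3 + 3 * f.b * x ^ 2 * y + 3 * f.c * x * y ^ 2 + f.d * y ^ 3

/-- The discriminant `a²d² − 3b²c² + 4ac³ + 4b³d − 6abcd` of a binary cubic form. -/
def disc (f : BinaryCubic R) : R :=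
  f.a ^ 2 * f.d ^ 2 - 3 * f.b ^ 2 * f.c ^ 2 + 4 * f.a * f.c ^ 3 + 4 * f.b ^ 3 * f.d
    - 6 * f.a * f.b * f.c * f.d

/-- The action of a 2×2 matrix `g = (p q; r s)` on binary cubic forms by linear change of
variables: `(g · f)(x, y) = f (p x + q y) (r x + s y)`, written out on coefficients. -/
def act (g : Matrix (Fin 2) (Fin 2) R) (f : BinaryCubic R) : BinaryCubic R where
  a := f.a * g 0 0 ^ 3 + 3 * f.b * g 0 0 ^ 2 * g 1 0 + 3 * f.c * g 0 0 * g 1 0 ^ 2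
      + f.d * g 1 0 ^ 3
  b := f.a * g 0 0 ^ 2 * g 0 1
      + f.b * (g 0 0 ^ 2 * g 1 1 + 2 * g 0 0 * g 0 1 * g 1 0)
      + f.c * (2 * g 0 0 * g 1 0 * g 1 1 + g 0 1 * g 1 0 ^ 2)
      + f.d * g 1 0 ^ 2 * g 1 1
  c := f.a * g 0 0 * g 0 1 ^ 2
      + f.b * (g 0 1 ^ 2 * g 1 0 + 2 * g 0 0 * g 0 1 * g 1 1)
      + f.c * (g 0 0 * g 1 1 ^ 2 + 2 * g 0 1 * g 1 0 * g 1 1)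
      + f.d * g 1 0 * g 1 1 ^ 2
  d := f.a * g 0 1 ^ 3 + 3 * f.b * g 0 1 ^ 2 * g 1 1 + 3 * f.c * g 0 1 * g 1 1 ^ 2
      + f.d * g 1 1 ^ 3

/-- Sanity check: `act` really is the linear change of variables. -/
theorem eval_act (g : Matrix (Fin 2) (Fin 2) R) (f : BinaryCubic R) (x y : R) :
    (act g f).eval x y = f.eval (g 0 0 * x + g 0 1 * y) (g 1 0 * x + g 1 1 * y) := by
  simp only [eval, act]; ring

/-- Two binary cubic forms over `R` are `SL₂(R)`-equivalent if they are related by a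
determinant-one linear change of variables. -/
def SLEquiv (f f' : BinaryCubic R) : Prop :=
  ∃ g : Matrix (Fin 2) (Fin 2) R, g.det = 1 ∧ act g f = f'

/-- Scalar multiplication of a binary cubic form (multiplying all coefficients). -/
def smul (r : R) (f : BinaryCubic R) : BinaryCubic R :=
  ⟨r * f.a, r * f.b, r * f.c, r * f.d⟩

/-- The scaled Hessian `h_f(x,y) = (b²−ac)x² + (bc−ad)xy + (c²−bd)y²` of a binary cubic form. -/
def hess (f : BinaryCubic R) (x y : R) : R :=
  (f.b ^ 2 - f.a * f.c) * x ^ 2 + (f.b * f.c - f.a * f.d) * x * y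
    + (f.c ^ 2 - f.b * f.d) * y ^ 2

/-- The Jacobian covariant `g_f = f_x · (h_f)_y − f_y · (h_f)_x` of a binary cubic form,
written out as a function of `x` and `y`. -/
def gcov (f : BinaryCubic R) (x y : R) : R :=
  (3 * f.a * x ^ 2 + 6 * f.b * x * y + 3 * f.c * y ^ 2)
      * ((f.b * f.c - f.a * f.d) * x + 2 * (f.c ^ 2 - f.b * f.d) * y)
    - (3 * f.b * x ^ 2 + 6 * f.c * x * y + 3 * f.d * y ^ 2)
      * (2 * (f.b ^ 2 - f.a * f.c) * x + (f.b * f.c - f.a * f.d) * y)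

/-- A binary cubic form over a field is reducible if it factors as a homogeneous linear form
times a homogeneous quadratic form over the field. -/
def Reducible {F : Type*} [Field F] (f : BinaryCubic F) : Prop :=
  ∃ l₁ l₂ q₁ q₂ q₃ : F, ∀ x y : F,
    f.eval x y = (l₁ * x + l₂ * y) * (q₁ * x ^ 2 + q₂ * x * y + q₃ * y ^ 2)

/-- Coefficientwise image of a binary cubic form under a ring homomorphism. -/
def map {R S : Type*} [CommRing R] [CommRing S] (φ : R →+* S) (f : BinaryCubic R) :
    BinaryCubic S :=
  ⟨φ f.a, φ f.b, φ f.c, φ f.d⟩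

end BinaryCubic

/-!
The twisted action is `f ↦ r · (D · f)` with `r = s⁻¹` a unit and `D = diag(1, s)` invertible.
Such a map is a bijection on forms (undone by `r⁻¹` and `D⁻¹`), multiplies the discriminant by
`r⁴ (det D)⁶ = s²`, and respects `SL₂`-equivalence because conjugation by `D` preserves `SL₂`.
It therefore restricts to a bijection between the two discriminant loci and descends to orbits.
-/

namespace BinaryCubic

section CommRing

variable {R : Type*} [CommRing R]

theorem act_mul (g g' : Matrix (Fin 2) (Fin 2) R) (f : BinaryCubic R) :
    act (g * g') f = act g' (act g f) := by
  simp only [act, Matrix.mul_apply, Fin.sum_univ_two, mk.injEq]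
  exact ⟨by ring, by ring, by ring, by ring⟩

theorem act_one (f : BinaryCubic R) : act 1 f = f := by
  simp [act]

theorem act_smul (g : Matrix (Fin 2) (Fin 2) R) (r : R) (f : BinaryCubic R) :
    act g (smul r f) = smul r (act g f) := by
  simp only [act, smul, mk.injEq]
  exact ⟨by ring, by ring, by ring, by ring⟩

theorem smul_smul (r r' : R) (f : BinaryCubic R) : smul r (smul r' f) = smul (r * r') f := by
  simp only [smul, mk.injEq]
  exact ⟨by ring, by ring, by ring, by ring⟩

theorem smul_one (f : BinaryCubic R) : smul 1 f = f := by
  simp [smul]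

theorem disc_smul (r : R) (f : BinaryCubic R) : disc (smul r f) = r ^ 4 * disc f := by
  simp only [disc, smul]
  ring

theorem disc_act (g : Matrix (Fin 2) (Fin 2) R) (f : BinaryCubic R) :
    disc (act g f) = g.det ^ 6 * disc f := by
  simp only [disc, act, Matrix.det_fin_two]
  ring

theorem SLEquiv.smul {f f' : BinaryCubic R} (r : R) (h : SLEquiv f f') :
    SLEquiv (smul r f) (smul r f') := by
  obtain ⟨g, hdet, rfl⟩ := h
  exact ⟨g, hdet, act_smul g r f⟩

/-- If `f' = g · f` then `D · f' = (D⁻¹ g D) · (D · f)`, and `D⁻¹ g D` still has determinant one. -/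
theorem SLEquiv.act {f f' : BinaryCubic R} (D : GL (Fin 2) R) (h : SLEquiv f f') :
    SLEquiv (act D f) (act D f') := by
  obtain ⟨g, hdet, rfl⟩ := h
  refine ⟨(D⁻¹ : GL (Fin 2) R) * g * D, ?_, ?_⟩
  · rw [Matrix.det_mul, Matrix.det_mul, hdet, mul_one, ← Matrix.det_mul, Units.inv_mul,
      Matrix.det_one]
  · rw [← act_mul, ← act_mul, ← mul_assoc, ← mul_assoc, Units.mul_inv, one_mul]

def twist (r : Rˣ) (D : GL (Fin 2) R) : BinaryCubic R ≃ BinaryCubic R where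
  toFun f := smul r (act D f)
  invFun f := smul ↑r⁻¹ (act ↑D⁻¹ f)
  left_inv f := by
    dsimp only
    rw [act_smul, ← act_mul, Units.mul_inv, act_one, smul_smul, Units.inv_mul, smul_one]
  right_inv f := by
    dsimp only
    rw [act_smul, ← act_mul, Units.inv_mul, act_one, smul_smul, Units.mul_inv, smul_one]

theorem SLEquiv.twist {f f' : BinaryCubic R} (r : Rˣ) (D : GL (Fin 2) R) (h : SLEquiv f f') :
    SLEquiv (twist r D f) (twist r D f') :=
  (h.act D).smul (r : R)

theorem slEquiv_twist_iff (r : Rˣ) (D : GL (Fin 2) R) (f f' : BinaryCubic R) :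
    SLEquiv (twist r D f) (twist r D f') ↔ SLEquiv f f' := by
  refine ⟨fun h => ?_, SLEquiv.twist r D⟩
  have twist_inv_twist (g : BinaryCubic R) : twist r⁻¹ D⁻¹ (twist r D g) = g :=
    (twist r D).symm_apply_apply g
  simpa only [twist_inv_twist] using h.twist r⁻¹ D⁻¹

end CommRing

end BinaryCubic

open BinaryCubic in
theorem twisted_action_disc_and_orbit_bijection_general {F : Type*} [Field F]
    (s : F) (hs : s ≠ 0) (Δ : F) :
    (∀ f : BinaryCubic F, disc f = Δ →
      disc (smul s⁻¹ (act !![1, 0; 0, s] f)) = s ^ 2 * Δ) ∧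
    ∃ e : Quot (fun f g : {f : BinaryCubic F // disc f = Δ} => SLEquiv f.1 g.1) ≃
          Quot (fun f g : {f : BinaryCubic F // disc f = s ^ 2 * Δ} => SLEquiv f.1 g.1),
      ∀ (f : {f : BinaryCubic F // disc f = Δ})
        (htw : disc (smul s⁻¹ (act !![1, 0; 0, s] f.1)) = s ^ 2 * Δ),
        e (Quot.mk _ f) = Quot.mk _ ⟨smul s⁻¹ (act !![1, 0; 0, s] f.1), htw⟩ := by
  have hdet : (!![1, 0; 0, s] : Matrix (Fin 2) (Fin 2) F).det ≠ 0 := by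
    simpa [Matrix.det_fin_two_of] using hs
  set T := twist (Units.mk0 s hs)⁻¹ (Matrix.GeneralLinearGroup.mkOfDetNeZero _ hdet)
  have hT : ∀ f, T f = smul s⁻¹ (act !![1, 0; 0, s] f) := fun _ => rfl
  have hdisc : ∀ f, disc (T f) = s ^ 2 * disc f := by
    intro f
    rw [hT, disc_smul, disc_act, Matrix.det_fin_two_of, one_mul, mul_zero, sub_zero]
    field_simp
  have hdisc_iff : ∀ f, disc f = Δ ↔ disc (T f) = s ^ 2 * Δ := fun f => by
    rw [hdisc, mul_right_inj' (pow_ne_zero 2 hs)]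
  refine ⟨fun f hf => by rw [← hT, hdisc, hf], ?_⟩
  exact ⟨Quot.congr (T.subtypeEquiv hdisc_iff) fun f f' => (slEquiv_twist_iff _ _ f.1 f'.1).symm,
    fun f htw => rfl⟩

open BinaryCubic in
/-- Over a field `F` of characteristic ≠ 2, 3 with `s ∈ F*`, the twisted action
`f ↦ s⁻¹ · (diag(1,s) · f)` sends forms of discriminant `Δ` to forms of discriminant `s²Δ`, and
induces a bijection between the `SL₂(F)`-orbits of discriminant `Δ` and those of
discriminant `s²Δ`. -/
theorem twisted_action_disc_and_orbit_bijection {F : Type*} [Field F]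
    (h2 : (2 : F) ≠ 0) (h3 : (3 : F) ≠ 0) (s : F) (hs : s ≠ 0) (Δ : F) :
    (∀ f : BinaryCubic F, disc f = Δ →
      disc (smul s⁻¹ (act !![1, 0; 0, s] f)) = s ^ 2 * Δ) ∧
    ∃ e : Quot (fun f g : {f : BinaryCubic F // disc f = Δ} => SLEquiv f.1 g.1) ≃
          Quot (fun f g : {f : BinaryCubic F // disc f = s ^ 2 * Δ} => SLEquiv f.1 g.1),
      ∀ (f : {f : BinaryCubic F // disc f = Δ})
        (htw : disc (smul s⁻¹ (act !![1, 0; 0, s] f.1)) = s ^ 2 * Δ),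
        e (Quot.mk _ f) = Quot.mk _ ⟨smul s⁻¹ (act !![1, 0; 0, s] f.1), htw⟩ :=
  twisted_action_disc_and_orbit_bijection_general s hs Δ
end

section
/- Let F be a field of characteristic different from 2 and 3, let D ∈ F*, let K = F[t]/(t² − D) with τ the image of t, and let δ = u + vτ ∈ K with u, v ∈ F. Then: (i) for all x, y ∈ F, (1/(2D))·Tr_{K/F}(δ·τ·(x + τy)³) = v·x³ + 3u·x²y + 3vD·xy² + uD·y³; (ii) the binary cubic form f_δ with coefficient quadruple (v, u, vD, uD) has discriminant Disc(f_δ) = 4D·N_{K/F}(δ)²; and (iii) the scaled Hessian of f_δ is h_{f_δ}(x,y) = N_{K/F}(δ)·(x² − D·y²). In particular, if N_{K/F}(δ) = 1 then Disc(f_δ) = 4D and h_{f_δ}(x,y) = N_{K/F}(x + τy). -/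
/-! In `K = F[t]/(t² − D)`, multiplication by `p + qτ` has matrix `!![p, D q; q, p]` on the
basis `(1, τ)`, so its trace is `2p` and its norm `p² − Dq²`. Reducing `δτ(x + τy)³` with
`τ² = D`, its rational part is `D · f_δ(x, y)`; the discriminant and Hessian formulas are
polynomial identities in `u`, `v`, `D`. -/

namespace BinaryCubic

variable {R : Type*} [CommRing R]

theorem disc_mk_mul (D u v : R) :
    disc ⟨v, u, v * D, u * D⟩ = 4 * D * (u ^ 2 - D * v ^ 2) ^ 2 := by
  simp only [disc]; ring

theorem hess_mk_mul (D u v x y : R) :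
    hess ⟨v, u, v * D, u * D⟩ x y = (u ^ 2 - D * v ^ 2) * (x ^ 2 - D * y ^ 2) := by
  simp only [hess]; ring

end BinaryCubic

open Polynomial

namespace AdjoinRoot

variable {R : Type*} [CommRing R] (D : R)

theorem root_X_sq_sub_C_sq : root (X ^ 2 - C D) ^ 2 = algebraMap R _ D := by
  rw [← sub_eq_zero, ← eval₂_root (X ^ 2 - C D), eval₂_sub, eval₂_C, eval₂_pow, eval₂_X]
  rfl

section Quadratic

variable {D}
local notation "τ" => root (X ^ 2 - C D)
local notation "ι" => algebraMap R (AdjoinRoot (X ^ 2 - C D))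

theorem add_mul_root_mul_add_mul_root (a b c d : R) :
    (ι a + ι b * τ) * (ι c + ι d * τ) = ι (a * c + D * b * d) + ι (a * d + b * c) * τ := by
  simp only [map_add, map_mul]
  linear_combination ι b * ι d * root_X_sq_sub_C_sq D

theorem add_mul_root_pow_three (x y : R) :
    (ι x + ι y * τ) ^ 3 = ι (x ^ 3 + 3 * D * x * y ^ 2) + ι (3 * x ^ 2 * y + D * y ^ 3) * τ := by
  simp only [map_add, map_mul, map_pow, map_ofNat]
  linear_combination (3 * ι x * ι y ^ 2 + ι y ^ 3 * τ) * root_X_sq_sub_C_sq D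

theorem add_mul_root_mul_root (u v : R) : (ι u + ι v * τ) * τ = ι (D * v) + ι u * τ := by
  rw [map_mul]
  linear_combination ι v * root_X_sq_sub_C_sq D

variable [Nontrivial R]

noncomputable def basisXSqSubC : Module.Basis (Fin 2) R (AdjoinRoot (X ^ 2 - C D)) :=
  (powerBasis' (monic_X_pow_sub_C D two_ne_zero)).basis.reindex
    (finCongr natDegree_X_pow_sub_C)

theorem basisXSqSubC_zero : basisXSqSubC (D := D) 0 = 1 := by
  rw [basisXSqSubC, Module.Basis.reindex_apply, PowerBasis.basis_eq_pow]
  exact pow_zero _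

theorem basisXSqSubC_one : basisXSqSubC (D := D) 1 = τ := by
  rw [basisXSqSubC, Module.Basis.reindex_apply, PowerBasis.basis_eq_pow]
  exact pow_one _

theorem basisXSqSubC_repr (p q : R) :
    (basisXSqSubC (D := D)).repr (ι p + ι q * τ) = Finsupp.single 0 p + Finsupp.single 1 q := by
  rw [← basisXSqSubC_one, ← mul_one (ι p), ← basisXSqSubC_zero (D := D), ← Algebra.smul_def,
    ← Algebra.smul_def]
  simp

theorem leftMulMatrix_basisXSqSubC (p q : R) :
    Algebra.leftMulMatrix basisXSqSubC (ι p + ι q * τ) = !![p, D * q; q, p] := by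
  have col0 : (ι p + ι q * τ) * basisXSqSubC 0 = ι p + ι q * τ := by
    rw [basisXSqSubC_zero, mul_one]
  have col1 : (ι p + ι q * τ) * basisXSqSubC 1 = ι (D * q) + ι p * τ := by
    rw [basisXSqSubC_one, add_mul_root_mul_root]
  rw [Matrix.eta_fin_two (Algebra.leftMulMatrix _ _)]
  simp only [Algebra.leftMulMatrix_eq_repr_mul, col0, col1, basisXSqSubC_repr]
  simp

theorem trace_add_mul_root (p q : R) : Algebra.trace R _ (ι p + ι q * τ) = 2 * p := by
  rw [Algebra.trace_eq_matrix_trace basisXSqSubC, leftMulMatrix_basisXSqSubC,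
    Matrix.trace_fin_two_of, two_mul]

theorem norm_add_mul_root (p q : R) : Algebra.norm R (ι p + ι q * τ) = p ^ 2 - D * q ^ 2 := by
  rw [Algebra.norm_eq_matrix_det basisXSqSubC, leftMulMatrix_basisXSqSubC, Matrix.det_fin_two_of]
  ring

theorem trace_mul_root_mul_cube (u v x y : R) :
    Algebra.trace R _ ((ι u + ι v * τ) * τ * (ι x + ι y * τ) ^ 3)
      = 2 * D * (⟨v, u, v * D, u * D⟩ : BinaryCubic R).eval x y := by
  rw [add_mul_root_mul_root, add_mul_root_pow_three, add_mul_root_mul_add_mul_root,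
    trace_add_mul_root, BinaryCubic.eval]
  ring

end Quadratic

end AdjoinRoot

open Polynomial in
theorem trace_form_disc_hess_general {F : Type*} [Field F]
    (h2 : (2 : F) ≠ 0) (D : F) (hD : D ≠ 0) (u v : F) :
    let K := AdjoinRoot (X ^ 2 - C D)
    let τ : K := AdjoinRoot.root (X ^ 2 - C D)
    let δ : K := algebraMap F K u + algebraMap F K v * τ
    let fδ : BinaryCubic F := ⟨v, u, v * D, u * D⟩
    (∀ x y : F,
      (2 * D)⁻¹ * Algebra.trace F K (δ * τ * (algebraMap F K x + algebraMap F K y * τ) ^ 3)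
        = fδ.eval x y) ∧
    BinaryCubic.disc fδ = 4 * D * Algebra.norm F δ ^ 2 ∧
    (∀ x y : F, BinaryCubic.hess fδ x y = Algebra.norm F δ * (x ^ 2 - D * y ^ 2)) ∧
    (Algebra.norm F δ = 1 →
      BinaryCubic.disc fδ = 4 * D ∧
      ∀ x y : F, BinaryCubic.hess fδ x y
        = Algebra.norm F (algebraMap F K x + algebraMap F K y * τ)) := by
  intro K τ δ fδ
  have hN : Algebra.norm F δ = u ^ 2 - D * v ^ 2 := AdjoinRoot.norm_add_mul_root u v
  refine ⟨fun x y => ?_, ?_, fun x y => ?_, fun hN1 => ⟨?_, fun x y => ?_⟩⟩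
  · rw [AdjoinRoot.trace_mul_root_mul_cube, inv_mul_cancel_left₀ (mul_ne_zero h2 hD)]
  · rw [hN, BinaryCubic.disc_mk_mul]
  · rw [hN, BinaryCubic.hess_mk_mul]
  · rw [BinaryCubic.disc_mk_mul, ← hN, hN1, one_pow, mul_one]
  · rw [BinaryCubic.hess_mk_mul, ← hN, hN1, one_mul, AdjoinRoot.norm_add_mul_root]

open Polynomial in
/-- Let `F` be a field of characteristic ≠ 2, 3, `D ∈ F*`, `K = F[t]/(t² − D)`
with `τ` the image of `t`, and `δ = u + vτ`. Then (i) `(1/2D)·Tr(δτ(x+τy)³)` is the binary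
cubic form with coefficients `(v, u, vD, uD)`; (ii) that form has discriminant `4D·N(δ)²`;
(iii) its scaled Hessian is `N(δ)(x² − Dy²)`; and in particular if `N(δ) = 1` it has
discriminant `4D` and scaled Hessian `N(x + τy)`. -/
theorem trace_form_disc_hess {F : Type*} [Field F]
    (h2 : (2 : F) ≠ 0) (h3 : (3 : F) ≠ 0) (D : F) (hD : D ≠ 0) (u v : F) :
    let K := AdjoinRoot (X ^ 2 - C D)
    let τ : K := AdjoinRoot.root (X ^ 2 - C D)
    let δ : K := algebraMap F K u + algebraMap F K v * τ
    let fδ : BinaryCubic F := ⟨v, u, v * D, u * D⟩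
    (∀ x y : F,
      (2 * D)⁻¹ * Algebra.trace F K (δ * τ * (algebraMap F K x + algebraMap F K y * τ) ^ 3)
        = fδ.eval x y) ∧
    BinaryCubic.disc fδ = 4 * D * Algebra.norm F δ ^ 2 ∧
    (∀ x y : F, BinaryCubic.hess fδ x y = Algebra.norm F δ * (x ^ 2 - D * y ^ 2)) ∧
    (Algebra.norm F δ = 1 →
      BinaryCubic.disc fδ = 4 * D ∧
      ∀ x y : F, BinaryCubic.hess fδ x y
        = Algebra.norm F (algebraMap F K x + algebraMap F K y * τ)) :=
  trace_form_disc_hess_general h2 D hD u v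
end

section
/- Let F be a field of characteristic different from 2 and 3, let D ∈ F*, let f be a binary cubic form over F with Disc(f) = 4D, and let a, b ∈ F. Suppose (x₀, y₀, z₀) ∈ F³ satisfies z₀ ≠ 0 and f(x₀, y₀) + a·h_f(x₀, y₀)·z₀ + b·z₀³ = 0. Then the pair X = h_f(x₀, y₀)/z₀² and Y = g_f(x₀, y₀)/(6·z₀³) satisfies the Weierstrass equation Y² = X³ + D·(a·X + b)². -/
/-! The covariants of a binary cubic satisfy the classical syzygy `g_f² = 36 h_f³ + 9 Disc(f) f²`.
At a point of `f + a h_f z + b z³ = 0` we may replace `f` by `-z (a h_f + b z²)`, and dividing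
by `(6 z³)²` turns the syzygy into the Weierstrass equation. -/

theorem BinaryCubic.gcov_sq {R : Type*} [CommRing R] (f : BinaryCubic R) (x y : R) :
    f.gcov x y ^ 2 = 36 * f.hess x y ^ 3 + 9 * f.disc * f.eval x y ^ 2 := by
  simp only [BinaryCubic.gcov, BinaryCubic.hess, BinaryCubic.eval, BinaryCubic.disc]
  ring

open BinaryCubic in
theorem covering_point_on_weierstrass_general {F : Type*} [Field F]
    (h2 : (2 : F) ≠ 0) (h3 : (3 : F) ≠ 0) (D : F)
    (f : BinaryCubic F) (hf : disc f = 4 * D) (a b : F)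
    (x₀ y₀ z₀ : F) (hz : z₀ ≠ 0)
    (hsol : f.eval x₀ y₀ + a * hess f x₀ y₀ * z₀ + b * z₀ ^ 3 = 0) :
    (gcov f x₀ y₀ / (6 * z₀ ^ 3)) ^ 2
      = (hess f x₀ y₀ / z₀ ^ 2) ^ 3 + D * (a * (hess f x₀ y₀ / z₀ ^ 2) + b) ^ 2 := by
  have h6 : (6 : F) ≠ 0 := by
    simpa only [show (2 : F) * 3 = 6 by norm_num] using mul_ne_zero h2 h3
  have syzygy_on_curve : gcov f x₀ y₀ ^ 2
      = 36 * (hess f x₀ y₀ ^ 3 + D * (a * hess f x₀ y₀ * z₀ + b * z₀ ^ 3) ^ 2) := by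
    rw [gcov_sq, hf]
    linear_combination
      36 * D * (f.eval x₀ y₀ - (a * hess f x₀ y₀ * z₀ + b * z₀ ^ 3)) * hsol
  field_simp
  linear_combination syzygy_on_curve

open BinaryCubic in
/-- Let `F` be a field of characteristic ≠ 2, 3, `D ∈ F*`, `f` a binary cubic form
over `F` with `Disc f = 4D`, and `a, b ∈ F`. If `(x₀, y₀, z₀) ∈ F³` with `z₀ ≠ 0` satisfies
`f(x₀,y₀) + a·h_f(x₀,y₀)·z₀ + b·z₀³ = 0`, then `X = h_f(x₀,y₀)/z₀²`, `Y = g_f(x₀,y₀)/(6z₀³)`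
satisfy `Y² = X³ + D(aX + b)²`. -/
theorem covering_point_on_weierstrass {F : Type*} [Field F]
    (h2 : (2 : F) ≠ 0) (h3 : (3 : F) ≠ 0) (D : F) (hD : D ≠ 0)
    (f : BinaryCubic F) (hf : disc f = 4 * D) (a b : F)
    (x₀ y₀ z₀ : F) (hz : z₀ ≠ 0)
    (hsol : f.eval x₀ y₀ + a * hess f x₀ y₀ * z₀ + b * z₀ ^ 3 = 0) :
    (gcov f x₀ y₀ / (6 * z₀ ^ 3)) ^ 2
      = (hess f x₀ y₀ / z₀ ^ 2) ^ 3 + D * (a * (hess f x₀ y₀ / z₀ ^ 2) + b) ^ 2 :=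
  covering_point_on_weierstrass_general h2 h3 D f hf a b x₀ y₀ z₀ hz hsol
end

section
/- Let F be a field of characteristic different from 2 and 3, let a, b, s ∈ F, set D = s², and let W be the Weierstrass curve y² = x³ + Da²·x² + 2Dab·x + Db² (i.e., the curve y² = x³ + D(ax + b)²). Assume the discriminant of W is nonzero. Then (0, bs) is a point on W, and in the group of points of W over F the point P = (0, bs) has order exactly 3 (in particular 3·P = 0 and P ≠ 0). -/
/-!
Absorbing `D = s²`, the curve is `y² = x³ + (ux + v)²` with `u = sa` and `v = sb`. The line
`y = ux + v` meets it only where `x³ = 0`, so it is the tangent at `P = (0, v)` and meets the curve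
there with multiplicity three: `P` is a flex, hence `2P = -P`. The discriminant is
`16 v³ (4u³ - 27v)`, so it vanishes unless `2v ≠ 0`, which makes `P` a point of order exactly `3`.
-/

open WeierstrassCurve WeierstrassCurve.Affine WeierstrassCurve.Affine.Point

theorem addOrderOf_eq_three_of_add_self_eq_neg {G : Type*} [AddGroup G] {P : G} (hP : P ≠ 0)
    (h : P + P = -P) : addOrderOf P = 3 := by
  have : Fact (Nat.Prime 3) := ⟨Nat.prime_three⟩
  refine addOrderOf_eq_prime ?_ hP
  rw [succ_nsmul, two_nsmul, h, neg_add_cancel]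

namespace WeierstrassCurve

section CommRing

variable {R : Type*} [CommRing R] (u v : R)

/-- The curve `y² = x³ + (ux + v)²`. -/
def cubeAddSq : WeierstrassCurve.Affine R :=
  { a₁ := 0, a₂ := u ^ 2, a₃ := 0, a₄ := 2 * u * v, a₆ := v ^ 2 }

lemma cubeAddSq_Δ : (cubeAddSq u v).Δ = 16 * v ^ 3 * (4 * u ^ 3 - 27 * v) := by
  simp only [Δ, b₂, b₄, b₆, b₈, cubeAddSq]
  ring

lemma two_mul_ne_zero_of_cubeAddSq_Δ_ne_zero {u v : R} (hΔ : (cubeAddSq u v).Δ ≠ 0) :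
    2 * v ≠ 0 :=
  fun hv => hΔ <| by rw [cubeAddSq_Δ]; linear_combination 8 * v ^ 2 * (4 * u ^ 3 - 27 * v) * hv

lemma cubeAddSq_equation_zero : (cubeAddSq u v).Equation 0 v := by
  rw [equation_iff]
  simp only [cubeAddSq]
  ring

lemma cubeAddSq_negY_zero : (cubeAddSq u v).negY 0 v = -v := by
  simp only [negY, cubeAddSq]
  ring

lemma cubeAddSq_ne_negY_zero {u v : R} (hv : 2 * v ≠ 0) : v ≠ (cubeAddSq u v).negY 0 v := by
  rw [cubeAddSq_negY_zero]
  exact fun h => hv (by linear_combination h)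

end CommRing

variable {F : Type*} [Field F] [DecidableEq F] {u v : F}

lemma cubeAddSq_slope_zero (hv : 2 * v ≠ 0) : (cubeAddSq u v).slope 0 0 v v = u := by
  have hv' : v - -v ≠ 0 := by rwa [sub_neg_eq_add, ← two_mul]
  rw [slope_of_Y_ne rfl (cubeAddSq_ne_negY_zero hv), cubeAddSq_negY_zero, div_eq_iff hv']
  simp only [cubeAddSq]
  ring

lemma cubeAddSq_add_self_eq_neg (hv : 2 * v ≠ 0) (hP : (cubeAddSq u v).Nonsingular 0 v) :
    some _ _ hP + some _ _ hP = -some _ _ hP := by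
  rw [add_self_of_Y_ne' (cubeAddSq_ne_negY_zero hv), neg_inj, some.injEq, cubeAddSq_slope_zero hv]
  constructor
  · simp only [addX, cubeAddSq]; ring
  · simp only [negAddY, addX, cubeAddSq]; ring

theorem cubeAddSq_addOrderOf_eq_three (hv : 2 * v ≠ 0) (hP : (cubeAddSq u v).Nonsingular 0 v) :
    addOrderOf (some _ _ hP) = 3 :=
  addOrderOf_eq_three_of_add_self_eq_neg (some_ne_zero hP) (cubeAddSq_add_self_eq_neg hv hP)

end WeierstrassCurve

open Classical in
theorem threeTorsion_point_on_weierstrass_general {F : Type*} [Field F]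
    (a b s : F) :
    let D := s ^ 2
    let W : WeierstrassCurve.Affine F :=
      { a₁ := 0, a₂ := D * a ^ 2, a₃ := 0, a₄ := 2 * D * a * b, a₆ := D * b ^ 2 }
    W.Δ ≠ 0 →
      W.Equation 0 (b * s) ∧ ∃ hP : W.Nonsingular 0 (b * s),
        addOrderOf (WeierstrassCurve.Affine.Point.some _ _ hP) = 3 := by
  intro D W hΔ
  have hW : W = cubeAddSq (s * a) (b * s) := by
    ext <;> simp only [W, D, cubeAddSq] <;> ring
  clear_value W D
  subst hW
  have hv := two_mul_ne_zero_of_cubeAddSq_Δ_ne_zero hΔ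
  have hEq := cubeAddSq_equation_zero (s * a) (b * s)
  exact ⟨hEq, (equation_iff_nonsingular_of_Δ_ne_zero hΔ).mp hEq,
    cubeAddSq_addOrderOf_eq_three hv _⟩

open Classical in
/-- Let `F` be a field of characteristic ≠ 2, 3, let `a, b, s ∈ F`, `D = s²`, and
let `W : y² = x³ + D(ax + b)²` be the corresponding Weierstrass curve, assumed to have nonzero
discriminant. Then `(0, bs)` is a (nonsingular) point of `W`, and in the group of points of `W`
over `F` it has order exactly `3`. -/
theorem threeTorsion_point_on_weierstrass {F : Type*} [Field F]
    (h2 : (2 : F) ≠ 0) (h3 : (3 : F) ≠ 0) (a b s : F) :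
    let D := s ^ 2
    let W : WeierstrassCurve.Affine F :=
      { a₁ := 0, a₂ := D * a ^ 2, a₃ := 0, a₄ := 2 * D * a * b, a₆ := D * b ^ 2 }
    W.Δ ≠ 0 →
      W.Equation 0 (b * s) ∧ ∃ hP : W.Nonsingular 0 (b * s),
        addOrderOf (WeierstrassCurve.Affine.Point.some _ _ hP) = 3 :=
  threeTorsion_point_on_weierstrass_general a b s
end

section
/- Any two binary cubic forms over ℝ with the same nonzero discriminant are SL₂(ℝ)-equivalent, and any two binary cubic forms over ℂ with the same nonzero discriminant are SL₂(ℂ)-equivalent. Consequently, for each Δ ≠ 0 there is exactly one SL₂(ℝ)-orbit of binary cubic forms over ℝ of discriminant Δ, and exactly one SL₂(ℂ)-orbit of binary cubic forms over ℂ of discriminant Δ. -/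
/-!
A root `t` of `f(t, 1)` (over `ℝ` by the intermediate value theorem, over `ℂ` by algebraic
closure) gives a determinant-one change of variables killing the `x³`-coefficient. The form is
then `3b x²y + 3c xy² + d y³` with `b ≠ 0` because `Δ = b³(4d) - 3b²c² ≠ 0`, and the matrix
`(b⁻¹, -c/2; 0, b)` takes it to `x²y + (Δ/4) y³`. So every form of discriminant `Δ ≠ 0` lies
in the orbit of this single normal form.
-/

open Polynomial in
theorem Polynomial.exists_isRoot_of_odd_natDegree_real {P : ℝ[X]} (hP : Odd P.natDegree) :
    ∃ x, P.IsRoot x := by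
  wlog hlc : 0 ≤ P.leadingCoeff generalizing P
  · obtain ⟨x, hx⟩ := this (P := -P) (by rwa [natDegree_neg]) (by rw [leadingCoeff_neg]; linarith)
    exact ⟨x, by simpa using hx⟩
  have hdeg : 0 < P.degree := natDegree_pos_iff_degree_pos.mp hP.pos
  obtain ⟨x, hx⟩ :=
    ((P.tendsto_atTop_of_leadingCoeff_nonneg hdeg hlc).eventually_ge_atTop 0).exists
  have hlc' : (P.comp (-X)).leadingCoeff ≤ 0 := by
    rw [comp_neg_X_leadingCoeff_eq, hP.neg_one_pow]; linarith
  obtain ⟨y, hy⟩ := (((P.comp (-X)).tendsto_atBot_of_leadingCoeff_nonpos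
    (by rwa [degree_comp_neg_X]) hlc').eventually_le_atBot 0).exists
  rw [eval_comp, eval_neg, eval_X] at hy
  exact intermediate_value_univ (-y) x P.continuous ⟨hy, hx⟩

namespace BinaryCubic

variable {R : Type*} [CommRing R]

theorem act_a (g : Matrix (Fin 2) (Fin 2) R) (f : BinaryCubic R) :
    (act g f).a = f.eval (g 0 0) (g 1 0) :=
  rfl

theorem act_act (g h : Matrix (Fin 2) (Fin 2) R) (f : BinaryCubic R) :
    act h (act g f) = act (g * h) f := by
  simp only [act, Matrix.mul_apply, Fin.sum_univ_two, mk.injEq]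
  refine ⟨by ring, by ring, by ring, by ring⟩

namespace SLEquiv

theorem refl (f : BinaryCubic R) : SLEquiv f f :=
  ⟨1, Matrix.det_one, act_one f⟩

theorem symm {f f' : BinaryCubic R} (h : SLEquiv f f') : SLEquiv f' f := by
  obtain ⟨g, hg, rfl⟩ := h
  refine ⟨g.adjugate, by rw [Matrix.det_adjugate, hg, one_pow], ?_⟩
  rw [act_act, Matrix.mul_adjugate, hg, one_smul, act_one]

theorem trans {f f' f'' : BinaryCubic R} (h : SLEquiv f f') (h' : SLEquiv f' f'') :
    SLEquiv f f'' := by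
  obtain ⟨g, hg, rfl⟩ := h
  obtain ⟨g', hg', rfl⟩ := h'
  exact ⟨g * g', by rw [Matrix.det_mul, hg, hg', one_mul], (act_act g g' f).symm⟩

theorem disc_eq {f f' : BinaryCubic R} (h : SLEquiv f f') : disc f = disc f' := by
  obtain ⟨g, hg, rfl⟩ := h
  rw [disc_act, hg, one_pow, one_mul]

end SLEquiv

variable {F : Type*} [Field F]

theorem exists_slEquiv_a_eq_zero
    (hroot : ∀ f : BinaryCubic F, f.a ≠ 0 → ∃ t, f.eval t 1 = 0) (f : BinaryCubic F) :
    ∃ f', SLEquiv f f' ∧ f'.a = 0 := by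
  by_cases hfa : f.a = 0
  · exact ⟨f, .refl f, hfa⟩
  obtain ⟨t, ht⟩ := hroot f hfa
  refine ⟨act !![t, -1; 1, 0] f, ⟨_, by simp [Matrix.det_fin_two_of], rfl⟩, ?_⟩
  simpa [act_a] using ht

theorem slEquiv_normalForm_of_a_eq_zero (h2 : (2 : F) ≠ 0) {f : BinaryCubic F}
    (ha : f.a = 0) (hb : f.b ≠ 0) : SLEquiv f ⟨0, 1, 0, disc f / 4⟩ := by
  have h4 : (4 : F) ≠ 0 := by
    rw [show (4 : F) = 2 * 2 by norm_num]; exact mul_ne_zero h2 h2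
  -- the shear `(1, -c/2b; 0, 1)`, which kills `c`, followed by the rescaling `diag(b⁻¹, b)`
  refine ⟨!![f.b⁻¹, -f.c / 2; 0, f.b], by simp [Matrix.det_fin_two_of, hb], ?_⟩
  simp only [act, disc, ha, mk.injEq, Matrix.of_apply, Matrix.cons_val', Matrix.cons_val_zero,
    Matrix.cons_val_one, Matrix.empty_val', Matrix.cons_val_fin_one]
  refine ⟨by ring, ?_, ?_, ?_⟩ <;> field_simp <;> ring

theorem slEquiv_normalForm (h2 : (2 : F) ≠ 0)
    (hroot : ∀ f : BinaryCubic F, f.a ≠ 0 → ∃ t, f.eval t 1 = 0) {f : BinaryCubic F}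
    (hf : disc f ≠ 0) : SLEquiv f ⟨0, 1, 0, disc f / 4⟩ := by
  obtain ⟨f', hff', ha'⟩ := exists_slEquiv_a_eq_zero hroot f
  have hb' : f'.b ≠ 0 := by
    rintro hb'
    apply hf
    rw [hff'.disc_eq, disc, ha', hb']
    ring
  rw [hff'.disc_eq]
  exact hff'.trans (slEquiv_normalForm_of_a_eq_zero h2 ha' hb')

theorem slEquiv_of_disc_eq (h2 : (2 : F) ≠ 0)
    (hroot : ∀ f : BinaryCubic F, f.a ≠ 0 → ∃ t, f.eval t 1 = 0) {f f' : BinaryCubic F}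
    (hf : disc f ≠ 0) (hff' : disc f = disc f') : SLEquiv f f' := by
  have hnf := slEquiv_normalForm h2 hroot hf
  have hnf' := slEquiv_normalForm h2 hroot (hff' ▸ hf)
  rw [← hff'] at hnf'
  exact hnf.trans hnf'.symm

open Polynomial

noncomputable def dehomogenize (f : BinaryCubic R) : R[X] :=
  C f.a * X ^ 3 + C (3 * f.b) * X ^ 2 + C (3 * f.c) * X + C f.d

theorem eval_dehomogenize (f : BinaryCubic R) (t : R) : f.dehomogenize.eval t = f.eval t 1 := by
  simp only [dehomogenize, eval, eval_add, eval_mul, eval_pow, eval_C, eval_X]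
  ring

theorem natDegree_dehomogenize {f : BinaryCubic R} (ha : f.a ≠ 0) :
    f.dehomogenize.natDegree = 3 :=
  natDegree_cubic ha

theorem exists_eval_eq_zero_of_isAlgClosed [IsAlgClosed F] {f : BinaryCubic F} (ha : f.a ≠ 0) :
    ∃ t, f.eval t 1 = 0 := by
  obtain ⟨t, ht⟩ := IsAlgClosed.exists_root f.dehomogenize
    (degree_ne_of_natDegree_ne (by rw [natDegree_dehomogenize ha]; decide))
  exact ⟨t, eval_dehomogenize f t ▸ ht⟩

theorem exists_eval_eq_zero_real {f : BinaryCubic ℝ} (ha : f.a ≠ 0) : ∃ t, f.eval t 1 = 0 := by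
  obtain ⟨t, ht⟩ := Polynomial.exists_isRoot_of_odd_natDegree_real
    (P := f.dehomogenize) (by rw [natDegree_dehomogenize ha]; decide)
  exact ⟨t, eval_dehomogenize f t ▸ ht⟩

end BinaryCubic

open BinaryCubic in
/-- Any two binary cubic forms over `ℝ` (resp. over `ℂ`) with the same nonzero
discriminant are `SL₂(ℝ)`-equivalent (resp. `SL₂(ℂ)`-equivalent); consequently for each
`Δ ≠ 0` there is exactly one such orbit of discriminant `Δ`. -/
theorem slEquiv_of_disc_eq_real_complex :
    (∀ f g : BinaryCubic ℝ, disc f ≠ 0 → disc f = disc g → SLEquiv f g) ∧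
    (∀ f g : BinaryCubic ℂ, disc f ≠ 0 → disc f = disc g → SLEquiv f g) :=
  ⟨fun _ _ => slEquiv_of_disc_eq two_ne_zero fun _ => exists_eval_eq_zero_real,
    fun _ _ => slEquiv_of_disc_eq two_ne_zero fun _ => exists_eval_eq_zero_of_isAlgClosed⟩
end
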